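/- Consider any schedule produced by a Priority Greedy algorithm on a WGP instance. Then for each packet j, the completion time satisfies C_j ≤ R_{b(j)} + (γ/γ₀) · Σ_{i ∈ P(j)} π_i. -/

import Mathlib

/-- An instance of the Wireless Gathering Problem. -/
structure WGPInstance (V J : Type*) where
  /-- the communication graph -/
  G : SimpleGraph V
  /-- the sink -/
  s : V
  /-- the interference radius -/
  dI : ℕ
  /-- origins of the packets -/
  o : J → V
  /-- release dates of the packets -/
  r : J → ℕ

namespace WGPInstance

variable {V J : Type*}

/-- Two calls `(u,v)` and `(u',v')` occurring in the same round interfere if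
`d(u',v) ≤ d_I` or `d(u,v') ≤ d_I`. -/
def Interferes (I : WGPInstance V J) (u v u' v' : V) : Prop :=
  I.G.edist u' v ≤ I.dI ∨ I.G.edist u v' ≤ I.dI

/-- A feasible (unit-speed) schedule: `x j t` is the node holding packet `j` at round `t`.
Packets sit at their origin until their release date, move along edges of `G`
(the transition from `x j t` to `x j (t+1)` being a call of round `t`), calls of a round
are pairwise non-interfering and have distinct senders, and every packet reaches the sink. -/
def Feasible (I : WGPInstance V J) (x : J → ℕ → V) : Prop :=
  (∀ j t, t ≤ I.r j → x j t = I.o j) ∧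
  (∀ j t, x j (t + 1) = x j t ∨ I.G.Adj (x j t) (x j (t + 1))) ∧
  (∀ j k t, j ≠ k → x j (t + 1) ≠ x j t → x k (t + 1) ≠ x k t →
    x j t ≠ x k t ∧ ¬ I.Interferes (x j t) (x j (t + 1)) (x k t) (x k (t + 1))) ∧
  (∀ j, ∃ t, x j t = I.s)

/-- The completion time of packet `j`: the first round `t ≥ r_j` with `x j t = s`. -/
noncomputable def completion (I : WGPInstance V J) (x : J → ℕ → V) (j : J) : ℕ :=
  sInf {t | I.r j ≤ t ∧ x j t = I.s}

/-- The flow time of packet `j`: `F_j = C_j - r_j`. -/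
noncomputable def flow (I : WGPInstance V J) (x : J → ℕ → V) (j : J) : ℕ :=
  I.completion x j - I.r j

/-- Packet `j` is available (active) at round `t` if it has been released and
has not yet reached the sink. -/
def Active (I : WGPInstance V J) (x : J → ℕ → V) (j : J) (t : ℕ) : Prop :=
  I.r j ≤ t ∧ x j t ≠ I.s

/-- `x` is a schedule that a Priority Greedy algorithm with priority function `prio`
(lower `prio`-value = higher priority) may produce: packets that reached the sink stay
there; every call moves an active packet one step along a shortest path to the sink;
and an active packet is left in place only if every such shortest-path step would
interfere with the call of some higher-priority packet of that round. -/
def PriorityGreedy (I : WGPInstance V J) (prio : J → ℕ) (x : J → ℕ → V) : Prop :=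
  Function.Injective prio ∧
  (∀ j t, x j t = I.s → x j (t + 1) = I.s) ∧
  (∀ j t, x j (t + 1) ≠ x j t →
    I.Active x j t ∧ I.G.dist (x j (t + 1)) I.s + 1 = I.G.dist (x j t) I.s) ∧
  (∀ j t, I.Active x j t → x j (t + 1) = x j t →
    ∀ v, I.G.Adj (x j t) v → I.G.dist v I.s + 1 = I.G.dist (x j t) I.s →
      ∃ k, prio k < prio j ∧ x k (t + 1) ≠ x k t ∧
        I.Interferes (x j t) v (x k t) (x k (t + 1)))

/-- FIFO is the Priority Greedy algorithm in which packets with earlier release dates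
have higher priority (ties broken arbitrarily). -/
def FIFO (I : WGPInstance V J) (x : J → ℕ → V) : Prop :=
  ∃ prio : J → ℕ, (∀ j k, I.r j < I.r k → prio j < prio k) ∧ I.PriorityGreedy prio x

end WGPInstance

namespace WGPInstance

variable {V J : Type*}

/-- Packet `j` is blocked at round `t`: it is available (released, not yet at the sink)
but is not sent in round `t`. -/
def Blocked (I : WGPInstance V J) (x : J → ℕ → V) (j : J) (t : ℕ) : Prop :=
  I.Active x j t ∧ x j (t + 1) = x j t

/-- `pred` is a valid blocking-forest parent function for the Priority Greedy schedule
`x` with priorities `prio`: `pred j = none` iff `j` is never blocked, and otherwise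
`pred j` is a packet that, in the last round `tℓ` in which `j` is blocked, is sent, has
higher priority than `j`, and among all such packets is closest to `j`. -/
def IsBlockingParent (I : WGPInstance V J) (prio : J → ℕ) (x : J → ℕ → V)
    (pred : J → Option J) : Prop :=
  (∀ j, pred j = none ↔ ∀ t, ¬ I.Blocked x j t) ∧
  ∀ j tℓ, IsGreatest {t | I.Blocked x j t} tℓ →
    ∃ k, pred j = some k ∧ prio k < prio j ∧ x k (tℓ + 1) ≠ x k tℓ ∧
      ∀ k', prio k' < prio j → x k' (tℓ + 1) ≠ x k' tℓ →
        I.G.dist (x k tℓ) (x j tℓ) ≤ I.G.dist (x k' tℓ) (x j tℓ)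

end WGPInstance

/-!
Follow the blocking forest from the root `b(j)` down to `j`. A packet that is not blocked from
some round on moves to the sink at unit speed, so the root arrives by `r_b + δ_b`. Let `k` be
the parent of `i` and `t` the last round in which `i` is blocked; then `i` arrives by
`t + 1 + d(x_i, s)`. Some higher-priority packet sent in round `t` interferes with the next
step of `i`, so it, and hence `k` (the closest one), is sent from within `d_I + 1` of `i`; and
from round `t` on, `k` still needs `d(x_k, s)` rounds. This gives `C_i ≤ C_k + d_I + 2`, and
`C_i ≤ C_k + δ_i` because `t < C_k`. Finally `min (γ, δ_i) ≤ (γ/γ₀) π_i`, so summing these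
increments along the path gives the bound.
-/

theorem min_le_div_mul_min {K : Type*} [Field K] [LinearOrder K] [IsStrictOrderedRing K]
    {a b c : K} (hc : 0 < c) (hca : c ≤ a) (hb : 0 ≤ b) : min a b ≤ a / c * min b c := by
  rcases le_total b c with hbc | hcb
  · rw [min_eq_left hbc]
    exact (min_le_right a b).trans (le_mul_of_one_le_left hb ((one_le_div hc).mpr hca))
  · rw [min_eq_right hcb, div_mul_cancel₀ a hc.ne']
    exact min_le_left a b

theorem cast_min_add_two_le_div_mul (n d : ℕ) (hn : 1 ≤ n) :
    ((min (n + 2) d : ℕ) : ℚ) ≤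
      (n + 2 : ℚ) / ((n + 1) / 2 : ℕ) * ((min d ((n + 1) / 2) : ℕ) : ℚ) := by
  have hpos : (0 : ℚ) < ((n + 1) / 2 : ℕ) := by exact_mod_cast (by omega : 0 < (n + 1) / 2)
  have hle : (((n + 1) / 2 : ℕ) : ℚ) ≤ n + 2 := by
    exact_mod_cast (by omega : (n + 1) / 2 ≤ n + 2)
  push_cast [Nat.cast_min]
  exact min_le_div_mul_min hpos hle (Nat.cast_nonneg d)

theorem List.getLast_le_head_add_sum_tail {α M : Type*} [AddCommMonoid M] [PartialOrder M]
    [IsOrderedAddMonoid M] {R : α → α → Prop} {f w : α → M}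
    (hR : ∀ a b, R a b → f b ≤ f a + w b) :
    ∀ {l : List α} (hl : l ≠ []), l.IsChain R →
      f (l.getLast hl) ≤ f (l.head hl) + (l.tail.map w).sum
  | [a], _, _ => by simp
  | a :: b :: l, _, hchain => by
    obtain ⟨hab, hchain⟩ := List.isChain_cons_cons.mp hchain
    calc f ((a :: b :: l).getLast _) ≤ f b + (l.map w).sum :=
          List.getLast_le_head_add_sum_tail hR (List.cons_ne_nil b l) hchain
      _ ≤ f a + w b + (l.map w).sum := add_le_add_left (hR a b hab) _
      _ = f a + ((b :: l).map w).sum := by simp [add_assoc]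

namespace SimpleGraph

variable {V : Type*} {G : SimpleGraph V}

theorem Reachable.exists_adj_dist_add_one {u v : V} (h : G.Reachable u v) (hne : u ≠ v) :
    ∃ w, G.Adj u w ∧ G.dist w v + 1 = G.dist u v := by
  obtain ⟨p, hp⟩ := h.exists_walk_length_eq_dist
  cases p with
  | nil => exact absurd rfl hne
  | @cons _ w _ hadj q =>
    refine ⟨w, hadj, le_antisymm ?_ ?_⟩
    · have := G.dist_le q
      rw [Walk.length_cons] at hp
      omega
    · have := hadj.reachable.dist_triangle_left v
      rwa [dist_eq_one_iff_adj.mpr hadj, add_comm] at this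

end SimpleGraph

namespace WGPInstance

variable {V J : Type*} {I : WGPInstance V J} {prio : J → ℕ} {x : J → ℕ → V}

theorem Interferes.dist_le {u v u' v' : V} (huv : I.G.Adj u v) (hu'v' : I.G.Adj u' v')
    (h : I.Interferes u v u' v') : I.G.dist u' u ≤ I.dI + 1 := by
  refine ENat.toNat_le_of_le_natCast ?_
  push_cast
  rcases h with h | h
  · calc I.G.edist u' u ≤ I.G.edist u' v + I.G.edist v u := I.G.edist_triangle
      _ ≤ I.dI + 1 := add_le_add h (SimpleGraph.edist_eq_one_iff_adj.mpr huv.symm).le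
  · calc I.G.edist u' u ≤ I.G.edist u' v' + I.G.edist v' u := I.G.edist_triangle
      _ ≤ 1 + I.dI := by
        rw [SimpleGraph.edist_comm (u := v')]
        exact add_le_add (SimpleGraph.edist_eq_one_iff_adj.mpr hu'v').le h
      _ = I.dI + 1 := add_comm _ _

theorem Feasible.adj_of_ne (hx : I.Feasible x) {j : J} {t : ℕ} (h : x j (t + 1) ≠ x j t) :
    I.G.Adj (x j t) (x j (t + 1)) :=
  (hx.2.1 j t).resolve_left h

theorem Feasible.reachable_of_le (hx : I.Feasible x) (j : J) {t t' : ℕ} (h : t ≤ t') :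
    I.G.Reachable (x j t) (x j t') := by
  induction t', h using Nat.le_induction with
  | base => rfl
  | succ n _ ih =>
    by_cases hn : x j (n + 1) = x j n
    · rwa [hn]
    · exact ih.trans (hx.adj_of_ne hn).reachable

theorem PriorityGreedy.eq_sink_of_le (hg : I.PriorityGreedy prio x) {j : J} {t t' : ℕ}
    (h : t ≤ t') (hs : x j t = I.s) : x j t' = I.s := by
  induction t', h using Nat.le_induction with
  | base => exact hs
  | succ n _ ih => exact hg.2.1 j n ih

theorem PriorityGreedy.dist_sink_succ (hg : I.PriorityGreedy prio x) (j : J) (t : ℕ) :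
    I.G.dist (x j (t + 1)) I.s = I.G.dist (x j t) I.s ∨
      I.G.dist (x j (t + 1)) I.s + 1 = I.G.dist (x j t) I.s := by
  by_cases h : x j (t + 1) = x j t
  · exact .inl (by rw [h])
  · exact .inr (hg.2.2.1 j t h).2

theorem PriorityGreedy.dist_sink_antitone (hg : I.PriorityGreedy prio x) (j : J) :
    Antitone fun t => I.G.dist (x j t) I.s :=
  antitone_nat_of_succ_le fun t => by rcases hg.dist_sink_succ j t with h | h <;> omega

theorem PriorityGreedy.dist_sink_le_dist_sink_add (hg : I.PriorityGreedy prio x) (j : J)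
    (t n : ℕ) : I.G.dist (x j t) I.s ≤ I.G.dist (x j (t + n)) I.s + n := by
  induction n with
  | zero => simp
  | succ n ih =>
    rcases hg.dist_sink_succ j (t + n) with h | h <;> rw [← add_assoc t n 1] <;> omega

theorem reachable_sink (hx : I.Feasible x) (hg : I.PriorityGreedy prio x)
    (j : J) (t : ℕ) : I.G.Reachable (x j t) I.s := by
  obtain ⟨t₀, h₀⟩ := hx.2.2.2 j
  have hs : x j (max t t₀) = I.s := hg.eq_sink_of_le (le_max_right t t₀) h₀
  exact hs ▸ hx.reachable_of_le j (le_max_left t t₀)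

theorem dist_sink_le_of_release_le (hx : I.Feasible x) (hg : I.PriorityGreedy prio x)
    {j : J} {t : ℕ} (ht : I.r j ≤ t) :
    I.G.dist (x j t) I.s ≤ I.G.dist (I.o j) I.s := by
  simpa only [hx.1 j (I.r j) le_rfl] using hg.dist_sink_antitone j ht

theorem completion_mem (hx : I.Feasible x) (hg : I.PriorityGreedy prio x)
    (j : J) : I.r j ≤ I.completion x j ∧ x j (I.completion x j) = I.s := by
  obtain ⟨t₀, h₀⟩ := hx.2.2.2 j
  have hne : {t | I.r j ≤ t ∧ x j t = I.s}.Nonempty :=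
    ⟨max (I.r j) t₀, le_max_left _ _, hg.eq_sink_of_le (le_max_right _ _) h₀⟩
  exact Nat.sInf_mem hne

theorem completion_le {j : J} {t : ℕ} (hr : I.r j ≤ t) (hs : x j t = I.s) :
    I.completion x j ≤ t :=
  Nat.sInf_le ⟨hr, hs⟩

theorem lt_completion_of_active (hx : I.Feasible x) (hg : I.PriorityGreedy prio x)
    {j : J} {t : ℕ} (h : I.Active x j t) : t < I.completion x j :=
  lt_of_not_ge fun hle => h.2 (hg.eq_sink_of_le hle (completion_mem hx hg j).2)

theorem add_dist_sink_le_completion (hx : I.Feasible x) (hg : I.PriorityGreedy prio x)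
    {j : J} {t : ℕ} (ht : t ≤ I.completion x j) :
    t + I.G.dist (x j t) I.s ≤ I.completion x j := by
  have := hg.dist_sink_le_dist_sink_add j t (I.completion x j - t)
  rw [Nat.add_sub_cancel' ht, (completion_mem hx hg j).2, SimpleGraph.dist_self] at this
  omega

theorem completion_le_add_dist_sink_of_not_blocked (hx : I.Feasible x)
    (hg : I.PriorityGreedy prio x) {j : J} {t₀ : ℕ} (hr : I.r j ≤ t₀)
    (hfree : ∀ t, t₀ ≤ t → ¬ I.Blocked x j t) :
    I.completion x j ≤ t₀ + I.G.dist (x j t₀) I.s := by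
  induction h : I.G.dist (x j t₀) I.s generalizing t₀ with
  | zero =>
    have hs : x j t₀ = I.s := by
      by_contra hne
      have := (reachable_sink hx hg j t₀).pos_dist_of_ne hne
      omega
    exact completion_le hr hs
  | succ n ih =>
    have hne : x j t₀ ≠ I.s := fun hs => by simp [hs] at h
    have hsent : x j (t₀ + 1) ≠ x j t₀ := fun hstay =>
      hfree t₀ le_rfl ⟨⟨hr, hne⟩, hstay⟩
    have hstep := (hg.2.2.1 j t₀ hsent).2
    have := ih (t₀ := t₀ + 1) (by omega) (fun t ht => hfree t (by omega)) (by omega)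
    omega

theorem exists_isGreatest_blocked (hx : I.Feasible x) (hg : I.PriorityGreedy prio x)
    {j : J} (h : ∃ t, I.Blocked x j t) :
    ∃ tℓ, IsGreatest {t | I.Blocked x j t} tℓ := by
  have hbdd : BddAbove {t | I.Blocked x j t} :=
    ⟨I.completion x j, fun t ht => (lt_completion_of_active hx hg ht.1).le⟩
  exact ⟨sSup {t | I.Blocked x j t}, Nat.sSup_mem h hbdd, fun t ht => le_csSup hbdd ht⟩

theorem exists_sent_near_of_blocked (hx : I.Feasible x) (hg : I.PriorityGreedy prio x)
    {j : J} {t : ℕ} (h : I.Blocked x j t) :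
    ∃ k, prio k < prio j ∧ x k (t + 1) ≠ x k t ∧ I.G.dist (x k t) (x j t) ≤ I.dI + 1 := by
  obtain ⟨w, hadj, hw⟩ := (reachable_sink hx hg j t).exists_adj_dist_add_one h.1.2
  obtain ⟨k, hk, hsent, hint⟩ := hg.2.2.2 j t h.1 h.2 w hadj hw
  exact ⟨k, hk, hsent, hint.dist_le hadj (hx.adj_of_ne hsent)⟩

theorem completion_le_add_min_of_isBlockingParent (hx : I.Feasible x)
    (hg : I.PriorityGreedy prio x) {pred : J → Option J} (hpred : I.IsBlockingParent prio x pred)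
    {j k : J} (hk : pred j = some k) :
    I.completion x j ≤ I.completion x k + min (I.dI + 2) (I.G.dist (I.o j) I.s) := by
  have hblocked : ∃ t, I.Blocked x j t := by
    by_contra! hnever
    simp [(hpred.1 j).2 hnever] at hk
  obtain ⟨tℓ, hlast⟩ := exists_isGreatest_blocked hx hg hblocked
  obtain ⟨k', hk', -, hsent, hclosest⟩ := hpred.2 j tℓ hlast
  obtain rfl : k = k' := Option.some_inj.mp (hk ▸ hk')
  obtain ⟨i, hi, hisent, hnear⟩ := exists_sent_near_of_blocked hx hg hlast.1
  have hkj : I.G.dist (x k tℓ) (x j tℓ) ≤ I.dI + 1 := (hclosest i hi hisent).trans hnear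
  have hCj : I.completion x j ≤ tℓ + 1 + I.G.dist (x j tℓ) I.s := by
    have := completion_le_add_dist_sink_of_not_blocked hx hg (t₀ := tℓ + 1)
      (hlast.1.1.1.trans tℓ.le_succ) fun t ht hb => by have := hlast.2 hb; omega
    rwa [hlast.1.2] at this
  have hk_late : tℓ < I.completion x k :=
    lt_completion_of_active hx hg (hg.2.2.1 k tℓ hsent).1
  have hCk := add_dist_sink_le_completion hx hg hk_late.le
  have htri := (reachable_sink hx hg k tℓ).dist_triangle_right (x j tℓ)
  rw [SimpleGraph.dist_comm] at hkj
  have hδ := dist_sink_le_of_release_le hx hg hlast.1.1.1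
  omega

theorem cast_completion_le_of_isBlockingParent (hdI : 1 ≤ I.dI) (hx : I.Feasible x)
    (hg : I.PriorityGreedy prio x) {pred : J → Option J} (hpred : I.IsBlockingParent prio x pred)
    {j k : J} (hk : pred j = some k) :
    (I.completion x j : ℚ) ≤ I.completion x k + (I.dI + 2 : ℚ) / ((I.dI + 1) / 2 : ℕ) *
      ((min (I.G.dist (I.o j) I.s) ((I.dI + 1) / 2) : ℕ) : ℚ) := by
  have h := completion_le_add_min_of_isBlockingParent hx hg hpred hk
  calc (I.completion x j : ℚ)
      ≤ I.completion x k + ((min (I.dI + 2) (I.G.dist (I.o j) I.s) : ℕ) : ℚ) := by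
        exact_mod_cast h
    _ ≤ _ := by grw [cast_min_add_two_le_div_mul _ _ hdI]

theorem cast_completion_le_of_blockingParent_eq_none (hdI : 1 ≤ I.dI) (hx : I.Feasible x)
    (hg : I.PriorityGreedy prio x) {pred : J → Option J} (hpred : I.IsBlockingParent prio x pred)
    {b : J} (hb : pred b = none) :
    (I.completion x b : ℚ) ≤
      ((I.r b + (I.G.dist (I.o b) I.s - min (I.G.dist (I.o b) I.s) ((I.dI + 1) / 2)) : ℕ) : ℚ)
        + (I.dI + 2 : ℚ) / ((I.dI + 1) / 2 : ℕ) *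
          ((min (I.G.dist (I.o b) I.s) ((I.dI + 1) / 2) : ℕ) : ℚ) := by
  have h := completion_le_add_dist_sink_of_not_blocked hx hg le_rfl fun t _ => (hpred.1 b).1 hb t
  rw [hx.1 b (I.r b) le_rfl] at h
  set δ := I.G.dist (I.o b) I.s
  calc (I.completion x b : ℚ)
      ≤ ((I.r b + (δ - min δ ((I.dI + 1) / 2)) : ℕ) : ℚ)
        + ((min (I.dI + 2) δ : ℕ) : ℚ) := by
        exact_mod_cast (by omega : I.completion x b ≤ _ + min (I.dI + 2) δ)
    _ ≤ _ := by grw [cast_min_add_two_le_div_mul _ _ hdI]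

end WGPInstance

open WGPInstance in
/-- Upper bound on the completion times of a Priority Greedy schedule: for each packet
`j`, if `L = (b(j), …, j)` is the path from the root `b(j)` to `j` in the blocking
forest (so `P(j)` is the set of packets on `L`), then
`C_j ≤ R_{b(j)} + (γ/γ₀) · Σ_{i ∈ P(j)} π_i`, where `δ_i = d(o_i, s)`, `γ = d_I + 2`,
`γ₀ = ⌊(d_I+1)/2⌋`, `π_i = min {δ_i, γ₀}` and `R_i = r_i + δ_i − π_i`. -/
theorem priorityGreedy_completion_upper_bound {V J : Type*}
    (I : WGPInstance V J) (hdI : 1 ≤ I.dI) (prio : J → ℕ) (x : J → ℕ → V)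
    (hx : I.Feasible x) (hgreedy : I.PriorityGreedy prio x)
    (pred : J → Option J) (hpred : I.IsBlockingParent prio x pred)
    (j : J) (L : List J) (hL : L ≠ [])
    (hlast : L.getLast hL = j)
    (hroot : pred (L.head hL) = none)
    (hchain : L.Chain' fun a b => pred b = some a) :
    ((I.completion x j : ℕ) : ℚ) ≤
      ((I.r (L.head hL) +
          (I.G.dist (I.o (L.head hL)) I.s
            - min (I.G.dist (I.o (L.head hL)) I.s) ((I.dI + 1) / 2)) : ℕ) : ℚ)
        + (I.dI + 2 : ℚ) / ((I.dI + 1) / 2 : ℕ) *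
            (L.map fun i => ((min (I.G.dist (I.o i) I.s) ((I.dI + 1) / 2) : ℕ) : ℚ)).sum := by
  subst hlast
  set q : ℚ := (I.dI + 2 : ℚ) / ((I.dI + 1) / 2 : ℕ)
  set π : J → ℚ := fun i => ((min (I.G.dist (I.o i) I.s) ((I.dI + 1) / 2) : ℕ) : ℚ)
  have hsplit : (L.map π).sum = π (L.head hL) + (L.tail.map π).sum := by
    rw [← List.sum_cons, ← List.map_cons, List.cons_head_tail]
  have hpath := List.getLast_le_head_add_sum_tail (f := fun i => (I.completion x i : ℚ))
    (w := fun i => q * π i)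
    (fun _ _ hk => cast_completion_le_of_isBlockingParent hdI hx hgreedy hpred hk) hL hchain
  have hroot := cast_completion_le_of_blockingParent_eq_none hdI hx hgreedy hpred hroot
  rw [hsplit, mul_add, ← List.sum_map_mul_left]
  linarith
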